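/- With the notation of the b = 2/25 dual basis {F₁, F₂, F₃, F₄} on ℂ² (F₁ := (25/2)E₁ − (5/2)(E₁+E₂) − 1, F₂ := (25/2)E₂ − (5/2)(E₁+E₂) − 1, F₃ := (25/7)E₃ + (5/7)(E₃+E₄) − 1, F₄ := (25/7)E₄ + (5/7)(E₃+E₄) − 1, where E₁ := (2/5)·[[1,0],[0,0]], E₂ := (1/5)·[[1,1],[1,1]], E₃ := (1/5)·[[1, −√2·e^{−iθ}], [−√2·e^{iθ}, 2]], E₄ := (1/5)·[[1, −√2·e^{iθ}], [−√2·e^{−iθ}, 2]], cos θ = 1/(2√2), θ ∈ (π/3, π/2]): for every real vector p = (p₁, p₂, p₃, p₄) with p₁ + p₂ + p₃ + p₄ = 1, the Hermitian matrix ρ := Σ_{y=1}^{4} p_y F_y is positive semidefinite if and only if f(p) ≥ 0, where f(p) := −4p₁² − 4p₂² − (8/7)p₃² − (8/7)p₄² + (9/2)p₁p₂ + 2p₁p₃ + 2p₁p₄ + 2p₂p₃ + 2p₂p₄ + (9/7)p₃p₄. -/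

import Mathlib

open Matrix
open scoped ComplexOrder

noncomputable section

/-- `E₁ = (2/5)·[[1,0],[0,0]]`. -/
def E1 : Matrix (Fin 2) (Fin 2) ℂ := (2 / 5 : ℂ) • !![1, 0; 0, 0]

/-- `E₂ = (1/5)·[[1,1],[1,1]]`. -/
def E2 : Matrix (Fin 2) (Fin 2) ℂ := (1 / 5 : ℂ) • !![1, 1; 1, 1]

/-- `E₃ = (1/5)·[[1, −√2·e^{−iθ}], [−√2·e^{iθ}, 2]]`. -/
def E3 (θ : ℝ) : Matrix (Fin 2) (Fin 2) ℂ :=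
  (1 / 5 : ℂ) •
    !![1, -((Real.sqrt 2 : ℝ) : ℂ) * Complex.exp (-(θ : ℂ) * Complex.I);
       -((Real.sqrt 2 : ℝ) : ℂ) * Complex.exp ((θ : ℂ) * Complex.I), 2]

/-- `E₄ = (1/5)·[[1, −√2·e^{iθ}], [−√2·e^{−iθ}, 2]]`. -/
def E4 (θ : ℝ) : Matrix (Fin 2) (Fin 2) ℂ :=
  (1 / 5 : ℂ) •
    !![1, -((Real.sqrt 2 : ℝ) : ℂ) * Complex.exp ((θ : ℂ) * Complex.I);
       -((Real.sqrt 2 : ℝ) : ℂ) * Complex.exp (-(θ : ℂ) * Complex.I), 2]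

/-- The example family `{E₁, E₂, E₃, E₄}`. -/
def exE (θ : ℝ) : Fin 4 → Matrix (Fin 2) (Fin 2) ℂ := ![E1, E2, E3 θ, E4 θ]

/-- `F₁ = (25/2)E₁ − (5/2)(E₁+E₂) − 1`. -/
def F1 : Matrix (Fin 2) (Fin 2) ℂ := (25 / 2 : ℂ) • E1 - (5 / 2 : ℂ) • (E1 + E2) - 1

/-- `F₂ = (25/2)E₂ − (5/2)(E₁+E₂) − 1`. -/
def F2 : Matrix (Fin 2) (Fin 2) ℂ := (25 / 2 : ℂ) • E2 - (5 / 2 : ℂ) • (E1 + E2) - 1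

/-- `F₃ = (25/7)E₃ + (5/7)(E₃+E₄) − 1`. -/
def F3 (θ : ℝ) : Matrix (Fin 2) (Fin 2) ℂ :=
  (25 / 7 : ℂ) • E3 θ + (5 / 7 : ℂ) • (E3 θ + E4 θ) - 1

/-- `F₄ = (25/7)E₄ + (5/7)(E₃+E₄) − 1`. -/
def F4 (θ : ℝ) : Matrix (Fin 2) (Fin 2) ℂ :=
  (25 / 7 : ℂ) • E4 θ + (5 / 7 : ℂ) • (E3 θ + E4 θ) - 1

/-- The dual family `{F₁, F₂, F₃, F₄}`. -/
def exF (θ : ℝ) : Fin 4 → Matrix (Fin 2) (Fin 2) ℂ := ![F1, F2, F3 θ, F4 θ]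

/-!
A trace-one Hermitian `2 × 2` matrix is positive semidefinite iff its determinant is nonnegative,
since its two real eigenvalues add up to `1`. Writing `ω θ = √2 e^{iθ}`, all entries of
`ρ = ∑ p_y F_y` are polynomials in `p`, `ω θ` and `ω (-θ) = conj (ω θ)`, and `det ρ` is symmetric
in `ω θ, ω (-θ)`. It is therefore determined by `ω θ * ω (-θ) = 2` and
`ω θ + ω (-θ) = 2√2 cos θ = 1`, and these reduce it to `f p`.
-/

theorem nonneg_and_nonneg_iff_add_nonneg_and_mul_nonneg {α : Type*} [CommRing α] [LinearOrder α]
    [IsStrictOrderedRing α] {a b : α} :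
    0 ≤ a ∧ 0 ≤ b ↔ 0 ≤ a + b ∧ 0 ≤ a * b := by
  refine ⟨fun ⟨ha, hb⟩ ↦ ⟨add_nonneg ha hb, mul_nonneg ha hb⟩, fun ⟨hs, hp⟩ ↦ ?_⟩
  constructor <;> nlinarith

theorem Matrix.IsHermitian.posSemidef_iff_trace_nonneg_and_det_nonneg {𝕜 : Type*} [RCLike 𝕜]
    {A : Matrix (Fin 2) (Fin 2) 𝕜} (hA : A.IsHermitian) :
    A.PosSemidef ↔ 0 ≤ A.trace ∧ 0 ≤ A.det := by
  rw [hA.posSemidef_iff_eigenvalues_nonneg, hA.trace_eq_sum_eigenvalues,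
    hA.det_eq_prod_eigenvalues, Fin.sum_univ_two, Fin.prod_univ_two, ← RCLike.ofReal_add,
    ← RCLike.ofReal_mul, RCLike.ofReal_nonneg, RCLike.ofReal_nonneg, Pi.le_def, Fin.forall_fin_two,
    Pi.zero_apply, Pi.zero_apply, nonneg_and_nonneg_iff_add_nonneg_and_mul_nonneg]

def ω (θ : ℝ) : ℂ := ((Real.sqrt 2 : ℝ) : ℂ) * Complex.exp ((θ : ℂ) * Complex.I)

section

variable (θ : ℝ)

theorem conj_ω : starRingEnd ℂ (ω θ) = ω (-θ) := by
  simp [ω, ← Complex.exp_conj]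

theorem ω_add_ω_neg : ω θ + ω (-θ) = 2 * Real.sqrt 2 * Real.cos θ := by
  rw [ω, ω, Complex.ofReal_neg, ← mul_add, Complex.ofReal_cos, ← Complex.two_cos]
  ring

theorem ω_mul_ω_neg : ω θ * ω (-θ) = 2 := by
  have hexp : Complex.exp (θ * Complex.I) * Complex.exp (-θ * Complex.I) = 1 := by
    rw [← Complex.exp_add, ← add_mul, add_neg_cancel, zero_mul, Complex.exp_zero]
  calc ω θ * ω (-θ)
      = ((Real.sqrt 2 * Real.sqrt 2 : ℝ) : ℂ) *
        (Complex.exp (θ * Complex.I) * Complex.exp (-θ * Complex.I)) := by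
        simp only [ω, Complex.ofReal_neg, Complex.ofReal_mul]; ring
    _ = 2 := by rw [Real.mul_self_sqrt zero_le_two, hexp]; norm_num

theorem E3_eq : E3 θ = (1 / 5 : ℂ) • !![1, -ω (-θ); -ω θ, 2] := by
  simp [E3, ω]

theorem E4_eq_E3_neg : E4 θ = E3 (-θ) := by
  simp [E3, E4]

theorem F4_eq_F3_neg : F4 θ = F3 (-θ) := by
  rw [F3, F4, E4_eq_E3_neg, E4_eq_E3_neg, neg_neg, add_comm (E3 θ)]

theorem F1_eq : F1 = !![5 / 2, -1 / 2; -1 / 2, -3 / 2] := by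
  ext i j; fin_cases i <;> fin_cases j <;> norm_num [F1, E1, E2]

theorem F2_eq : F2 = !![0, 2; 2, 1] := by
  ext i j; fin_cases i <;> fin_cases j <;> norm_num [F2, E1, E2]

theorem F3_eq : F3 θ = !![0, -(6 * ω (-θ) + ω θ) / 7; -(6 * ω θ + ω (-θ)) / 7, 1] := by
  rw [F3, E4_eq_E3_neg, E3_eq, E3_eq, neg_neg]
  ext i j; fin_cases i <;> fin_cases j <;> simp <;> ring

theorem F4_eq : F4 θ = !![0, -(6 * ω θ + ω (-θ)) / 7; -(6 * ω (-θ) + ω θ) / 7, 1] := by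
  rw [F4_eq_F3_neg, F3_eq, neg_neg]

theorem trace_exF (y : Fin 4) : (exF θ y).trace = 1 := by
  fin_cases y <;> norm_num [exF, F1_eq, F2_eq, F3_eq, F4_eq, trace_fin_two]

variable (p : Fin 4 → ℝ)

theorem sum_smul_exF : ∑ y, (p y : ℂ) • exF θ y =
    !![5 / 2 * (p 0 : ℂ),
        -p 0 / 2 + 2 * p 1 - ((6 * p 2 + p 3) * ω (-θ) + (p 2 + 6 * p 3) * ω θ) / 7;
      -p 0 / 2 + 2 * p 1 - ((6 * p 2 + p 3) * ω θ + (p 2 + 6 * p 3) * ω (-θ)) / 7,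
        -3 / 2 * p 0 + p 1 + p 2 + p 3] := by
  rw [Fin.sum_univ_four]
  simp only [exF, Matrix.cons_val, F1_eq, F2_eq, F3_eq, F4_eq]
  ext i j; fin_cases i <;> fin_cases j <;> simp <;> ring

theorem isHermitian_sum_smul_exF : (∑ y, (p y : ℂ) • exF θ y).IsHermitian := by
  rw [sum_smul_exF, IsHermitian.ext_iff]
  simp [Fin.forall_fin_two, conj_ω, map_ofNat]

end

theorem det_sum_smul_exF {θ : ℝ} (hθ : Real.cos θ = 1 / (2 * Real.sqrt 2)) (p : Fin 4 → ℝ) :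
    (∑ y, (p y : ℂ) • exF θ y).det =
      ((-4 * p 0 ^ 2 - 4 * p 1 ^ 2 - 8 / 7 * p 2 ^ 2 - 8 / 7 * p 3 ^ 2 +
        9 / 2 * p 0 * p 1 + 2 * p 0 * p 2 + 2 * p 0 * p 3 +
        2 * p 1 * p 2 + 2 * p 1 * p 3 + 9 / 7 * p 2 * p 3 : ℝ) : ℂ) := by
  have hsum : ω θ + ω (-θ) = 1 := by
    have hsqrt : Real.sqrt 2 ≠ 0 := by positivity
    rw [ω_add_ω_neg, hθ]
    push_cast
    field_simp
  rw [sum_smul_exF, det_fin_two_of]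
  push_cast
  linear_combination
    ((-p 0 / 2 + 2 * p 1) * (p 2 + p 3) -
      (6 * p 2 + p 3) * (p 2 + 6 * p 3) / 49 * (ω θ + ω (-θ) + 1)) * hsum -
    25 / 49 * (p 2 - p 3) ^ 2 * ω_mul_ω_neg θ

theorem posSemidef_iff_f_nonneg_general (θ : ℝ) (hθcos : Real.cos θ = 1 / (2 * Real.sqrt 2))
    (p : Fin 4 → ℝ) (hp : p 0 + p 1 + p 2 + p 3 = 1) :
    (∑ y, (p y : ℂ) • exF θ y).PosSemidef ↔
      0 ≤ -4 * p 0 ^ 2 - 4 * p 1 ^ 2 - 8 / 7 * p 2 ^ 2 - 8 / 7 * p 3 ^ 2 +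
        9 / 2 * p 0 * p 1 + 2 * p 0 * p 2 + 2 * p 0 * p 3 +
        2 * p 1 * p 2 + 2 * p 1 * p 3 + 9 / 7 * p 2 * p 3 := by
  have htrace : (∑ y, (p y : ℂ) • exF θ y).trace = 1 := by
    simp only [trace_sum, trace_smul, trace_exF, smul_eq_mul, mul_one]
    rw [Fin.sum_univ_four]
    exact_mod_cast hp
  rw [(isHermitian_sum_smul_exF θ p).posSemidef_iff_trace_nonneg_and_det_nonneg, htrace,
    det_sum_smul_exF hθcos, Complex.zero_le_real]
  exact and_iff_right zero_le_one

theorem posSemidef_iff_f_nonneg (θ : ℝ) (hθcos : Real.cos θ = 1 / (2 * Real.sqrt 2))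
    (hθmem : θ ∈ Set.Ioc (Real.pi / 3) (Real.pi / 2))
    (p : Fin 4 → ℝ) (hp : p 0 + p 1 + p 2 + p 3 = 1) :
    (∑ y, (p y : ℂ) • exF θ y).PosSemidef ↔
      0 ≤ -4 * p 0 ^ 2 - 4 * p 1 ^ 2 - 8 / 7 * p 2 ^ 2 - 8 / 7 * p 3 ^ 2 +
        9 / 2 * p 0 * p 1 + 2 * p 0 * p 2 + 2 * p 0 * p 3 +
        2 * p 1 * p 2 + 2 * p 1 * p 3 + 9 / 7 * p 2 * p 3 :=
  posSemidef_iff_f_nonneg_general θ hθcos p hp
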